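/- Let X be a Banach space over ℝ that is almost reflexive. Then every bounded linear operator T : X → ℓ¹ is strictly singular. -/

import Mathlib

/-!
On an infinite-dimensional subspace, Riesz's lemma gives a bounded 1-separated sequence; almost
reflexivity extracts a weakly Cauchy subsequence, whose consecutive differences are weakly null
but of norm at least 1. If `T` were bounded below there, their images would be weakly null in
`ℓ¹` and bounded away from 0, contradicting Schur's theorem that weakly null sequences in `ℓ¹`
are norm null. Schur's theorem is a gliding hump argument: passing to a subsequence and cutting
`ℕ` into consecutive blocks, each `y (k j)` carries almost all of its norm on the `j`-th block,
so pairing with the signs of `y (k j)` on the `j`-th block gives a functional that stays above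
`‖y (k j)‖ / 2` along the subsequence.
-/

open Filter Topology

section Defs

variable {E : Type*} [NormedAddCommGroup E] [NormedSpace ℝ E]
variable {F : Type*} [NormedAddCommGroup F] [NormedSpace ℝ F]

/-- A sequence converges weakly to `x₀`. -/
def WeakConvTo (x : ℕ → E) (x₀ : E) : Prop :=
  ∀ f : E →L[ℝ] ℝ, Tendsto (fun n => f (x n)) atTop (𝓝 (f x₀))

/-- A sequence is weakly Cauchy. -/
def WeaklyCauchySeq (x : ℕ → E) : Prop :=
  ∀ f : E →L[ℝ] ℝ, ∃ L : ℝ, Tendsto (fun n => f (x n)) atTop (𝓝 L)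

/-- Every bounded sequence has a weakly Cauchy subsequence. -/
def AlmostReflexive (E : Type*) [NormedAddCommGroup E] [NormedSpace ℝ E] : Prop :=
  ∀ x : ℕ → E, (∃ C : ℝ, ∀ n, ‖x n‖ ≤ C) →
    ∃ φ : ℕ → ℕ, StrictMono φ ∧ WeaklyCauchySeq (x ∘ φ)

/-- Every weakly convergent sequence converges in norm. -/
def SchurProperty (E : Type*) [NormedAddCommGroup E] [NormedSpace ℝ E] : Prop :=
  ∀ (x : ℕ → E) (x₀ : E), WeakConvTo x x₀ → Tendsto x atTop (𝓝 x₀)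

/-- Sequential reflexivity: every bounded sequence has a weakly convergent subsequence. -/
def SeqReflexive (E : Type*) [NormedAddCommGroup E] [NormedSpace ℝ E] : Prop :=
  ∀ x : ℕ → E, (∃ C : ℝ, ∀ n, ‖x n‖ ≤ C) →
    ∃ φ : ℕ → ℕ, StrictMono φ ∧ ∃ x₀ : E, WeakConvTo (x ∘ φ) x₀

/-- Every weakly Cauchy sequence converges weakly. -/
def WeaklySeqComplete (E : Type*) [NormedAddCommGroup E] [NormedSpace ℝ E] : Prop :=
  ∀ x : ℕ → E, WeaklyCauchySeq x → ∃ x₀ : E, WeakConvTo x x₀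

/-- No infinite-dimensional closed subspace is (sequentially) reflexive. -/
def VeryIrreflexive (E : Type*) [NormedAddCommGroup E] [NormedSpace ℝ E] : Prop :=
  ∀ X₀ : Subspace ℝ E, IsClosed (X₀ : Set E) → ¬FiniteDimensional ℝ X₀ →
    ¬SeqReflexive X₀

/-- A strictly singular bounded operator: on no infinite-dimensional closed subspace is it
an isomorphism onto its image. -/
def StrictlySingular (T : E →L[ℝ] F) : Prop :=
  ∀ X₀ : Subspace ℝ E, IsClosed (X₀ : Set E) → ¬FiniteDimensional ℝ X₀ →
    ¬∃ c : ℝ, 0 < c ∧ ∀ x ∈ X₀, c * ‖x‖ ≤ ‖T x‖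

/-- A weakly compact operator. -/
def WeaklyCompactOp (T : E →L[ℝ] F) : Prop :=
  ∀ x : ℕ → E, (∃ C : ℝ, ∀ n, ‖x n‖ ≤ C) →
    ∃ φ : ℕ → ℕ, StrictMono φ ∧ ∃ y : F, WeakConvTo (fun n => T (x (φ n))) y

/-- A completely continuous operator maps weakly convergent sequences to norm convergent ones. -/
def CompletelyContinuousOp (T : E →L[ℝ] F) : Prop :=
  ∀ (x : ℕ → E) (x₀ : E), WeakConvTo x x₀ → ∃ y : F, Tendsto (fun n => T (x n)) atTop (𝓝 y)

/-- The image of the closed unit ball is relatively compact in norm. -/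
def CompactOp (T : E →L[ℝ] F) : Prop :=
  IsCompact (closure (⇑T '' Metric.closedBall (0 : E) 1))

/-- The Dunford–Pettis property. -/
def DunfordPettisProp (E : Type*) [NormedAddCommGroup E] [NormedSpace ℝ E] : Prop :=
  ∀ (Z : Type*) [NormedAddCommGroup Z] [NormedSpace ℝ Z] [CompleteSpace Z],
    ∀ T : E →L[ℝ] Z, WeaklyCompactOp T → CompletelyContinuousOp T

/-- The reciprocal Dunford–Pettis property. -/
def ReciprocalDunfordPettisProp (E : Type*) [NormedAddCommGroup E] [NormedSpace ℝ E] : Prop :=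
  ∀ (Z : Type*) [NormedAddCommGroup Z] [NormedSpace ℝ Z] [CompleteSpace Z],
    ∀ T : E →L[ℝ] Z, CompletelyContinuousOp T → WeaklyCompactOp T

/-- The Dieudonné property. -/
def DieudonneProp (E : Type*) [NormedAddCommGroup E] [NormedSpace ℝ E] : Prop :=
  ∀ (Z : Type*) [NormedAddCommGroup Z] [NormedSpace ℝ Z] [CompleteSpace Z],
    ∀ T : E →L[ℝ] Z,
      (∀ x : ℕ → E, WeaklyCauchySeq x → ∃ y : Z, WeakConvTo (fun n => T (x n)) y) →
      WeaklyCompactOp T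

/-- A Grothendieck space: weak*-convergent sequences in the dual converge weakly. -/
def GrothendieckSpace (E : Type*) [NormedAddCommGroup E] [NormedSpace ℝ E] : Prop :=
  ∀ (f : ℕ → (E →L[ℝ] ℝ)) (g : E →L[ℝ] ℝ),
    (∀ x : E, Tendsto (fun n => f n x) atTop (𝓝 (g x))) →
    ∀ F : (E →L[ℝ] ℝ) →L[ℝ] ℝ, Tendsto (fun n => F (f n)) atTop (𝓝 (F g))

/-- The Banach space ℓ¹ of absolutely summable real sequences. -/
abbrev EllOne : Type := lp (fun _ : ℕ => ℝ) 1

/-- Quasi-reflexive: the canonical image of `E` in its bidual has finite codimension. -/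
def QuasiReflexive (E : Type*) [NormedAddCommGroup E] [NormedSpace ℝ E] : Prop :=
  FiniteDimensional ℝ
    ((StrongDual ℝ (StrongDual ℝ E)) ⧸
      LinearMap.range (NormedSpace.inclusionInDoubleDual ℝ E).toLinearMap)

/-- Hereditarily-ℓ¹: every infinite-dimensional closed subspace contains a closed subspace
topologically isomorphic to ℓ¹. -/
def HereditarilyEllOne (E : Type*) [NormedAddCommGroup E] [NormedSpace ℝ E] : Prop :=
  ∀ X₀ : Subspace ℝ E, IsClosed (X₀ : Set E) → ¬FiniteDimensional ℝ X₀ →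
    ∃ Z : Subspace ℝ E, Z ≤ X₀ ∧ IsClosed (Z : Set E) ∧ Nonempty (Z ≃L[ℝ] EllOne)

end Defs

section WeakConvergence

variable {E : Type*} [NormedAddCommGroup E] [NormedSpace ℝ E]
variable {F : Type*} [NormedAddCommGroup F] [NormedSpace ℝ F]

lemma WeakConvTo.map {x : ℕ → E} {x₀ : E} (hx : WeakConvTo x x₀) (T : E →L[ℝ] F) :
    WeakConvTo (fun n => T (x n)) (T x₀) :=
  fun f => hx (f.comp T)

lemma WeaklyCauchySeq.weakConvTo_succ_sub {x : ℕ → E} (hx : WeaklyCauchySeq x) :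
    WeakConvTo (fun n => x (n + 1) - x n) 0 := fun f => by
  obtain ⟨L, hL⟩ := hx f
  simpa using (hL.comp (tendsto_add_atTop_nat 1)).sub hL

end WeakConvergence

open scoped ENNReal

namespace EllOne

lemma hasSum_norm (f : EllOne) : HasSum (fun i => ‖f i‖) ‖f‖ := by
  simpa using lp.hasSum_norm (p := 1) (by norm_num) f

noncomputable def pairing (b : lp (fun _ : ℕ => ℝ) ∞) : EllOne →L[ℝ] ℝ :=
  lp.dualPairing ∞ 1 (fun _ => ContinuousLinearMap.mul ℝ ℝ) (K := 1)
    (fun _ => ContinuousLinearMap.opNorm_mul_le ℝ ℝ) b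

lemma norm_mul_apply_le (b : lp (fun _ : ℕ => ℝ) ∞) (f : EllOne) (i : ℕ) :
    ‖b i * f i‖ ≤ ‖b‖ * ‖f i‖ := by
  rw [norm_mul]
  gcongr
  exact lp.norm_apply_le_norm ENNReal.top_ne_zero b i

lemma hasSum_pairing (b : lp (fun _ : ℕ => ℝ) ∞) (f : EllOne) :
    HasSum (fun i => b i * f i) (pairing b f) :=
  (Summable.of_norm_bounded ((hasSum_norm f).summable.mul_left ‖b‖)
    (norm_mul_apply_le b f)).hasSum

lemma two_mul_sum_sub_norm_le_pairing {b : lp (fun _ : ℕ => ℝ) ∞} (hb : ‖b‖ ≤ 1) (f : EllOne)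
    {s : Finset ℕ} (hs : ∀ i ∈ s, b i * f i = ‖f i‖) :
    2 * ∑ i ∈ s, ‖f i‖ - ‖f‖ ≤ pairing b f := by
  have hs_sum : HasSum ((s : Set ℕ).indicator fun i => ‖f i‖) (∑ i ∈ s, ‖f i‖) :=
    hasSum_subtype_iff_indicator.mp (s.hasSum _)
  refine hasSum_le (fun i => ?_) ((hs_sum.mul_left 2).sub (hasSum_norm f)) (hasSum_pairing b f)
  by_cases hi : i ∈ s
  · simp [hi, hs i hi, two_mul]
  · have := (norm_mul_apply_le b f i).trans (mul_le_of_le_one_left (norm_nonneg _) hb)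
    simp only [Finset.mem_coe, hi, not_false_eq_true, Set.indicator_of_notMem, mul_zero, zero_sub]
    exact neg_le_of_abs_le this

lemma exists_sign_on_blocks (g : ℕ → EllOne) {m : ℕ → ℕ} (hm : StrictMono m) :
    ∃ b : lp (fun _ : ℕ => ℝ) ∞, ‖b‖ ≤ 1 ∧
      ∀ j, ∀ i ∈ Finset.Ico (m j) (m (j + 1)), b i * g j i = ‖g j i‖ := by
  have hblock : ∀ i, ∃ j, i < m (j + 1) := fun i => ⟨i, (Nat.lt_succ_self i).trans_le hm.le_apply⟩
  have hsign_le : ∀ x : ℝ, ‖(SignType.sign x : ℝ)‖ ≤ 1 := fun x => by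
    rcases lt_trichotomy x 0 with hx | rfl | hx <;> simp [*]
  let b : ℕ → ℝ := fun i => SignType.sign (g (Nat.find (hblock i)) i)
  have hb : Memℓp b ∞ := memℓp_infty ⟨1, Set.forall_mem_range.2 fun i => hsign_le _⟩
  refine ⟨⟨b, hb⟩, lp.norm_le_of_forall_le zero_le_one fun i => hsign_le _, fun j i hi => ?_⟩
  rw [Finset.mem_Ico] at hi
  have hfind : Nat.find (hblock i) = j := by
    rw [Nat.find_eq_iff]
    exact ⟨hi.2, fun j' hj' => not_lt.2 ((hm.monotone (Nat.succ_le_of_lt hj')).trans hi.1)⟩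
  simp [b, hfind, Real.norm_eq_abs]

lemma tendsto_apply_of_weakConvTo {y : ℕ → EllOne} {y₀ : EllOne} (hy : WeakConvTo y y₀) (i : ℕ) :
    Tendsto (fun k => y k i) atTop (𝓝 (y₀ i)) :=
  hy (lp.evalCLM ℝ _ 1 i)

section GlidingHump

variable {y : ℕ → EllOne} {δ : ℝ}

lemma exists_sum_range_lt (hy : ∀ i, Tendsto (fun k => y k i) atTop (𝓝 0)) (hδ : 0 < δ)
    (M n : ℕ) : ∃ k ≥ n, ∑ i ∈ Finset.range M, ‖y k i‖ < δ := by
  have h : Tendsto (fun k => ∑ i ∈ Finset.range M, ‖y k i‖) atTop (𝓝 0) := by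
    simpa using tendsto_finsetSum _ fun i _ => (hy i).norm
  exact ((eventually_ge_atTop n).and (h.eventually (gt_mem_nhds hδ))).exists

lemma exists_norm_sub_sum_range_lt (f : EllOne) (hδ : 0 < δ) (n : ℕ) :
    ∃ M > n, ‖f‖ - ∑ i ∈ Finset.range M, ‖f i‖ < δ := by
  have h := (hasSum_norm f).tendsto_sum_nat.eventually (lt_mem_nhds (sub_lt_self ‖f‖ hδ))
  obtain ⟨M, hnM, hM⟩ := ((eventually_gt_atTop n).and h).exists
  exact ⟨M, hnM, by linarith⟩

lemma exists_gliding_hump (hy : ∀ i, Tendsto (fun k => y k i) atTop (𝓝 0)) (hδ : 0 < δ) :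
    ∃ m k : ℕ → ℕ, StrictMono m ∧ (∀ j, j ≤ k j) ∧
      ∀ j, ∑ i ∈ Finset.range (m j), ‖y (k j) i‖ < δ ∧
        ‖y (k j)‖ - ∑ i ∈ Finset.range (m (j + 1)), ‖y (k j) i‖ < δ := by
  choose K hK_ge hK_head using exists_sum_range_lt hy hδ
  choose M hM_gt hM_tail using fun f => exists_norm_sub_sum_range_lt f hδ
  -- `k j := K (m j) j` makes the head of `y (k j)` small; only then is `m (j + 1)` chosen.
  let m : ℕ → ℕ := fun j => Nat.rec 0 (fun j mj => M (y (K mj j)) mj) j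
  exact ⟨m, fun j => K (m j) j, strictMono_nat_of_lt_succ fun j => hM_gt _ _,
    fun j => hK_ge _ _, fun j => ⟨hK_head _ _, hM_tail _ _⟩⟩

lemma not_weakConvTo_zero_of_le_norm (hy : WeakConvTo y 0) {ε : ℝ} (hε : 0 < ε)
    (hle : ∀ k, ε ≤ ‖y k‖) : False := by
  obtain ⟨m, k, hm, hk, hhump⟩ := exists_gliding_hump (δ := ε / 8)
    (fun i => by simpa using tendsto_apply_of_weakConvTo hy i) (by positivity)
  obtain ⟨b, hb, hbk⟩ := exists_sign_on_blocks (fun j => y (k j)) hm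
  have hbig : ∀ j, ε / 2 ≤ pairing b (y (k j)) := fun j => by
    have h := two_mul_sum_sub_norm_le_pairing hb _ (hbk j)
    rw [Finset.sum_Ico_eq_sub _ (hm.monotone j.le_succ)] at h
    linarith [hhump j, hle (k j)]
  have hsmall : Tendsto (fun j => pairing b (y (k j))) atTop (𝓝 0) := by
    simpa [Function.comp_def] using (hy (pairing b)).comp (tendsto_atTop_mono hk tendsto_id)
  obtain ⟨j, hj⟩ := (hsmall.eventually (gt_mem_nhds (half_pos hε))).exists
  linarith [hbig j]

end GlidingHump

theorem schurProperty : SchurProperty EllOne := by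
  intro y y₀ hy
  rw [← tendsto_sub_nhds_zero_iff, NormedAddGroup.tendsto_nhds_zero]
  intro ε hε
  by_contra hfar
  simp only [not_eventually, not_lt] at hfar
  obtain ⟨ψ, hψ, hψε⟩ := extraction_of_frequently_atTop hfar
  refine not_weakConvTo_zero_of_le_norm (y := fun n => y (ψ n) - y₀) (fun f => ?_) hε hψε
  simpa using ((hy f).comp hψ.tendsto_atTop).sub_const (f y₀)

end EllOne

theorem strictlySingular_of_almostReflexive_of_schurProperty
    {E : Type*} [NormedAddCommGroup E] [NormedSpace ℝ E]
    {F : Type*} [NormedAddCommGroup F] [NormedSpace ℝ F]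
    (hE : AlmostReflexive E) (hF : SchurProperty F) (T : E →L[ℝ] F) : StrictlySingular T := by
  rintro X₀ - hinf ⟨c, hc, hT⟩
  obtain ⟨R, u, -, hu, hsep⟩ := exists_seq_norm_le_one_le_norm_sub (𝕜 := ℝ) hinf
  obtain ⟨φ, hφ, hcauchy⟩ := hE (fun n => (u n : E)) ⟨R, hu⟩
  let z : ℕ → F := fun n => T (u (φ (n + 1)) - u (φ n) : E)
  have hz : Tendsto z atTop (𝓝 0) := by
    simpa [z] using hF _ _ (hcauchy.weakConvTo_succ_sub.map T)
  have hlow : ∀ n, c ≤ ‖z n‖ := fun n => calc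
    c ≤ c * ‖u (φ (n + 1)) - u (φ n)‖ :=
      le_mul_of_one_le_right hc.le (hsep (hφ.injective.ne n.succ_ne_self))
    _ ≤ ‖z n‖ := hT _ (sub_mem (u _).2 (u _).2)
  obtain ⟨n, hn⟩ := (hz.norm.eventually (gt_mem_nhds (by simpa using hc))).exists
  exact (hlow n).not_gt hn

variable {X : Type*} [NormedAddCommGroup X] [NormedSpace ℝ X] [CompleteSpace X]
variable {Y : Type*} [NormedAddCommGroup Y] [NormedSpace ℝ Y] [CompleteSpace Y]

/-- If `X` is almost reflexive, every bounded linear operator `T : X → ℓ¹` is strictly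
singular. -/
theorem stmt7 (hX : AlmostReflexive X) (T : X →L[ℝ] EllOne) : StrictlySingular T :=
  strictlySingular_of_almostReflexive_of_schurProperty hX EllOne.schurProperty T
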